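/- Fix X ∈ {B,C,D} and a positive integer n. Let v ∈ W^X_n with k := LD(v) > 0, where Des(u) = {i > 0 : u(i) > u(i+1)} and LD(u) = max({0} ∪ Des(u)). Let l ≥ 1 and let j_1, j_2, ..., j_l be integers such that either j_1 < j_2 < ··· < j_l < k, or X = B, j_1 = 0 and j_2 < ··· < j_l < k; assume that for each a ∈ {1,...,l}, t_{j_a,k} is a reflection of W^X_∞ and ℓ^X(v·t_{j_1,k}·t_{j_2,k}···t_{j_a,k}) = ℓ^X(v)+a. Define the partial order ≺_LD on W^B_∞ by: u ≺_LD w iff LD(u) < LD(w), or 0 < LD(u) = LD(w) and u(LD(u)) < w(LD(w)). Then the element u := v·t_{j_1,k}·t_{j_2,k}···t_{j_l,k} satisfies either (a) u ∈ W^X_n and u ≺_LD v, or (b) u ∈ W^X_{n+1} and LD(u) < LD(v). -/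

import Mathlib

open scoped Classical

noncomputable section

/-! ## Signed permutations -/

/-- We model signed permutations (and ordinary permutations of the positive
integers) inside the group `Equiv.Perm ℤ`. -/
abbrev SPerm := Equiv.Perm ℤ

/-- `w` is a signed permutation: `w(-i) = -w(i)` and finite support. -/
def IsSgn (w : SPerm) : Prop :=
  (∀ i : ℤ, w (-i) = -(w i)) ∧ Set.Finite {i : ℤ | w i ≠ i}

/-- The classical types B, C, D. -/
inductive XType | B | C | D
deriving DecidableEq

/-- `ℓ0(w)`: the number of positive `i` with `w i < 0`. -/
def negCount (w : SPerm) : ℕ := Set.ncard {i : ℤ | 0 < i ∧ w i < 0}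

/-- Membership in `W^X_∞`. -/
def IsW : XType → SPerm → Prop
  | XType.B, w => IsSgn w
  | XType.C, w => IsSgn w
  | XType.D, w => IsSgn w ∧ Even (negCount w)

/-- Membership in `W^X_n`: an element of `W^X_∞` fixing every `i` with `|i| > n`. -/
def IsWn (X : XType) (n : ℕ) (w : SPerm) : Prop :=
  IsW X w ∧ ∀ i : ℤ, (n : ℤ) < |i| → w i = i

/-- `inv(w)`: the number of pairs `(i,j)` of integers with `i < j` and `w i > w j`. -/
def invP (w : SPerm) : ℕ := Set.ncard {p : ℤ × ℤ | p.1 < p.2 ∧ w p.2 < w p.1}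

/-- The Coxeter length functions `ℓ^B = ℓ^C = (inv + ℓ0)/2`, `ℓ^D = (inv - ℓ0)/2`. -/
def lenX : XType → SPerm → ℕ
  | XType.B, w => (invP w + negCount w) / 2
  | XType.C, w => (invP w + negCount w) / 2
  | XType.D, w => (invP w - negCount w) / 2

/-- The element `t_{i,j}` exchanging `i ↔ j` and `-i ↔ -j`; in particular
`t_{0,k}` exchanges `-k ↔ k`, and `t_{j,j} = t_{-j,j} = 1`. -/
def tt (i j : ℤ) : SPerm :=
  if i = 0 then Equiv.swap (-j) j
  else if j = 0 then Equiv.swap (-i) i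
  else if i = j ∨ i = -j then 1
  else Equiv.swap i j * Equiv.swap (-i) (-j)

/-- The simple generators: `st 0 = t_{0,1}`, `st (-1) = t_{-1,2}`,
`st i = t_{i,i+1}` for `i ≥ 1`. -/
def st (a : ℤ) : SPerm := if a = -1 then tt (-1) 2 else tt a (a + 1)

/-- One step of the Demazure product: multiply by `st a` if this increases
length by one, else do nothing. -/
def demStep (X : XType) (w : SPerm) (a : ℤ) : SPerm :=
  if lenX X (w * st a) = lenX X w + 1 then w * st a else w

/-- Demazure product of `w` with the word `l` of simple generators. -/
def demFold (X : XType) (w : SPerm) (l : List ℤ) : SPerm := l.foldl (demStep X) w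

/-- Letters allowed in Hecke words of type `X`. -/
def allowedLetter : XType → ℤ → Prop
  | XType.B, a => 0 ≤ a
  | XType.C, a => 0 ≤ a
  | XType.D, a => a = -1 ∨ 1 ≤ a

/-- `l ∈ H^X(w)`: a Hecke word for `w` of type `X`. -/
def HeckeWord (X : XType) (w : SPerm) (l : List ℤ) : Prop :=
  (∀ a ∈ l, allowedLetter X a) ∧ demFold X 1 l = w

/-- `o^X(a)`. -/
def oX : XType → List ℤ → ℕ
  | XType.B, l => l.count 0
  | XType.C, _ => 0
  | XType.D, l => l.count (-1) + l.count 1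

/-- `b ∈ C^X(a)`: a compatible sequence for the word `a`. -/
def CompatX (X : XType) (a : List ℤ) (b : List ℕ) : Prop :=
  b.length = a.length ∧ (∀ x ∈ b, 0 < x) ∧ b.Pairwise (· ≤ ·) ∧
  (∀ i : ℕ, 0 < i → i + 1 < a.length →
    |a.getD (i-1) 0| ≤ |a.getD i 0| → |a.getD (i+1) 0| ≤ |a.getD i 0| →
    b.getD (i-1) 0 < b.getD (i+1) 0) ∧
  (X = XType.B → ∀ i : ℕ, i + 1 < a.length → a.getD i 0 = 0 → a.getD (i+1) 0 = 0 →
    b.getD i 0 < b.getD (i+1) 0) ∧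
  (X = XType.D → ∀ i : ℕ, i + 1 < a.length →
    a.getD i 0 = a.getD (i+1) 0 → (a.getD i 0 = -1 ∨ a.getD i 0 = 1) →
    b.getD i 0 < b.getD (i+1) 0)

/-- `γ(a,b)`: the number of `i` with `a_i = a_{i+1}` and `b_i = b_{i+1}`. -/
def gammaC (a : List ℤ) (b : List ℕ) : ℕ :=
  (List.range (a.length - 1)).countP
    (fun i => decide (a.getD i 0 = a.getD (i+1) 0 ∧ b.getD i 0 = b.getD (i+1) 0))

/-- `ℤ[β]`, with `β = Polynomial.X`. -/
abbrev PolyB := Polynomial ℤ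

/-- The K-Stanley symmetric function `F^X_w(z) ∈ ℤ[β]⟦z_1,z_2,...⟧`
(the variable `z_i` has index `i ≥ 1`; index `0` is unused), defined
coefficientwise: the coefficient of a monomial is the (finite) sum of the
contributions `2^{|b|-γ(a,b)-o^X(a)} β^{ℓ(a)-ℓ^X(w)}` over all pairs of a
Hecke word `a ∈ H^X(w)` and compatible sequence `b ∈ C^X(a)` with `z_b`
equal to the monomial. -/
def KSF (X : XType) (w : SPerm) : MvPowerSeries ℕ PolyB :=
  fun d => ∑ᶠ (p : List ℤ × List ℕ)
    (_ : HeckeWord X w p.1 ∧ CompatX X p.1 p.2 ∧ ∀ k : ℕ, d k = p.2.count k),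
    (2 : PolyB) ^ (p.2.dedup.length - gammaC p.1 p.2 - oX X p.1) *
      Polynomial.X ^ (p.1.length - lenX X w)

/-- A signed permutation is Grassmannian if `w(1) < w(2) < ⋯`. -/
def IsGrassmannian (w : SPerm) : Prop := ∀ i : ℤ, 0 < i → w i < w (i + 1)

/-- The descent set `Des(w) = {i > 0 : w(i) > w(i+1)}` (as a set of naturals). -/
def DesSet (w : SPerm) : Set ℕ := {i : ℕ | 0 < i ∧ w ((i : ℤ) + 1) < w (i : ℤ)}

/-- The last descent `LD(w) = max({0} ∪ Des(w))`. -/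
def LD (w : SPerm) : ℕ := sSup (DesSet w)

/-- The partial order `≺_LD`. -/
def precLD (u w : SPerm) : Prop :=
  LD u < LD w ∨ (0 < LD u ∧ LD u = LD w ∧ u (LD u : ℤ) < w (LD w : ℤ))

/-- `IncSteps f u ts` : successive right multiplications of `u` by the
elements of `ts` each increase `f` by exactly one. -/
def IncSteps (f : SPerm → ℕ) : SPerm → List SPerm → Prop
  | _, [] => True
  | u, t :: ts => f (u * t) = f u + 1 ∧ IncSteps f (u * t) ts

/-! ## Strict partitions and K-theoretic Schur P- and Q-functions -/

section

/-- A strict partition, encoded as a strictly decreasing list of positive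
integers. -/
def StrictPart (l : List ℕ) : Prop := l.Pairwise (· > ·) ∧ ∀ x ∈ l, 0 < x

/-- A partition (weakly decreasing list of positive integers). -/
def Partn (l : List ℕ) : Prop := l.Pairwise (· ≥ ·) ∧ ∀ x ∈ l, 0 < x

/-- Membership of the (1-based) box `p = (i,j)` in the shifted diagram `SD_l`. -/
def inSD (l : List ℕ) (p : ℕ × ℕ) : Prop :=
  1 ≤ p.1 ∧ p.1 ≤ l.length ∧ p.1 ≤ p.2 ∧ p.2 < p.1 + l.getD (p.1 - 1) 0

/-- `mu ⊆ lam`, i.e. `SD_mu ⊆ SD_lam`. -/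
def subShape (mu lam : List ℕ) : Prop := ∀ p, inSD mu p → inSD lam p

/-- Membership in the skew shifted diagram `SD_{lam/mu}`. -/
def inSkew (lam mu : List ℕ) (p : ℕ × ℕ) : Prop := inSD lam p ∧ ¬ inSD mu p

/-- A set-valued shifted tableau of shape `lam/mu`:  a finite nonempty set of
letters in each box of the skew shape, the empty set elsewhere.  The primed
alphabet `1' < 1 < 2' < 2 < ⋯` is encoded in `ℕ` by `k ↦ 2k` and `k' ↦ 2k-1`
(so primed letters are odd codes, and the order on codes is the alphabet
order). -/
def IsSVT (lam mu : List ℕ) (T : ℕ × ℕ → Finset ℕ) : Prop :=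
  (∀ p, (T p).Nonempty ↔ inSkew lam mu p) ∧ (∀ p, ∀ v ∈ T p, 0 < v)

/-- Semistandardness of a set-valued shifted tableau. -/
def IsSSVT (lam mu : List ℕ) (T : ℕ × ℕ → Finset ℕ) : Prop :=
  IsSVT lam mu T ∧
  (∀ i j : ℕ, inSkew lam mu (i, j) → inSkew lam mu (i, j+1) →
    (∀ u ∈ T (i, j), ∀ v ∈ T (i, j+1), u ≤ v) ∧
    (∀ v ∈ T (i, j), v ∈ T (i, j+1) → Even v)) ∧
  (∀ i j : ℕ, inSkew lam mu (i, j) → inSkew lam mu (i+1, j) →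
    (∀ u ∈ T (i, j), ∀ v ∈ T (i+1, j), u ≤ v) ∧
    (∀ v ∈ T (i, j), v ∈ T (i+1, j) → Odd v))

/-- `|T|`: total number of letters in `T`. -/
def tabSize (T : ℕ × ℕ → Finset ℕ) : ℕ := ∑ᶠ p : ℕ × ℕ, (T p).card

/-- The exponent of `z_k` in `z^T`: the number of boxes containing the letter
`k` (code `2k`) plus the number containing `k'` (code `2k-1`). -/
def tabWt (T : ℕ × ℕ → Finset ℕ) (k : ℕ) : ℕ :=
  Set.ncard {p : ℕ × ℕ | 2 * k ∈ T p} + Set.ncard {p : ℕ × ℕ | 2 * k - 1 ∈ T p}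

/-- The K-theoretic Schur P-function `GP_{lam/mu}(z) ∈ ℤ[β]⟦z_1,z_2,...⟧`,
defined coefficientwise as a tableau generating function. -/
def GPs (lam mu : List ℕ) : MvPowerSeries ℕ PolyB :=
  fun d => ∑ᶠ (T : ℕ × ℕ → Finset ℕ)
    (_ : IsSSVT lam mu T ∧
      (∀ i : ℕ, inSkew lam mu (i, i) → ∀ v ∈ T (i, i), Even v) ∧
      (∀ k : ℕ, d k = tabWt T k)),
    (Polynomial.X : PolyB) ^ (tabSize T - (lam.sum - mu.sum))

/-- The K-theoretic Schur Q-function `GQ_{lam/mu}(z) ∈ ℤ[β]⟦z_1,z_2,...⟧`. -/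
def GQs (lam mu : List ℕ) : MvPowerSeries ℕ PolyB :=
  fun d => ∑ᶠ (T : ℕ × ℕ → Finset ℕ)
    (_ : IsSSVT lam mu T ∧ (∀ k : ℕ, d k = tabWt T k)),
    (Polynomial.X : PolyB) ^ (tabSize T - (lam.sum - mu.sum))

end

/-! ## Type A: the symmetric group and double Grothendieck polynomials

We identify `S_∞` (permutations of the positive integers with finite support)
with the subgroup `W^A_∞` of signed permutations preserving the positive
integers; under this identification the Coxeter length of type A equals
`ℓ^B`, and the transposition `(i,j)` of positive integers corresponds to
`tt i j`. -/

section

/-- Membership in `S_∞ = W^A_∞`. -/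
def IsAperm (w : SPerm) : Prop := IsSgn w ∧ ∀ i : ℤ, 0 < i → 0 < w i

/-- The type A Coxeter length. -/
def lenA (w : SPerm) : ℕ := lenX XType.B w

/-- The polynomial ring `ℤ[β][x_1,x_2,...,y_1,y_2,...]`:  the variable
`Sum.inl i` is `x_i` and `Sum.inr i` is `y_i` (for `i ≥ 1`; index 0 unused). -/
abbrev MvP := MvPolynomial (ℕ ⊕ ℕ) PolyB

def xV (i : ℕ) : MvP := MvPolynomial.X (Sum.inl i)
def yV (i : ℕ) : MvP := MvPolynomial.X (Sum.inr i)
def βM : MvP := MvPolynomial.C Polynomial.X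

/-- `w` is the reverse permutation `n ⋯ 3 2 1 ∈ S_n`. -/
def IsRevA (n : ℕ) (w : SPerm) : Prop :=
  IsAperm w ∧ (∀ i : ℤ, 1 ≤ i → i ≤ (n : ℤ) → w i = (n : ℤ) + 1 - i) ∧
  (∀ i : ℤ, (n : ℤ) < i → w i = i)

/-- Exchange of the variables `x_i` and `x_{i+1}`. -/
def swapXvar (i : ℕ) (f : MvP) : MvP :=
  MvPolynomial.rename (Equiv.swap (Sum.inl i : ℕ ⊕ ℕ) (Sum.inl (i+1))) f

/-- `G` is the family of double Grothendieck polynomials `𝔊_w(x;y)`: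
it takes the prescribed product value on each reverse permutation, and
satisfies the divided-difference recursion `𝔊_{w s_i} = π_i 𝔊_w` whenever
`w(i) > w(i+1)` (stated multiplied through by `x_i - x_{i+1}`). -/
def GrothFamily (G : SPerm → MvP) : Prop :=
  (∀ n : ℕ, ∀ w : SPerm, IsRevA n w →
    G w = ∏ p ∈ Finset.filter
        (fun p : ℕ × ℕ => 1 ≤ p.1 ∧ 1 ≤ p.2 ∧ p.1 + p.2 ≤ n)
        (Finset.range (n+1) ×ˢ Finset.range (n+1)),
      (xV p.1 + yV p.2 + βM * xV p.1 * yV p.2)) ∧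
  (∀ w : SPerm, IsAperm w → ∀ i : ℕ, 0 < i → w ((i : ℤ) + 1) < w (i : ℤ) →
    (xV i - xV (i+1)) * G (w * st (i : ℤ)) =
      (1 + βM * xV (i+1)) * G w - (1 + βM * xV i) * swapXvar i (G w))

/-! ## Power series rings -/

/-- `ℤ[β]⟦z⟧`. -/
abbrev PS1 := MvPowerSeries ℕ PolyB
/-- `ℤ[β]⟦x;y⟧`: `Sum.inl i = x_i`, `Sum.inr i = y_i`. -/
abbrev PS2 := MvPowerSeries (ℕ ⊕ ℕ) PolyB
/-- `ℤ[β]⟦x;y;z⟧`: `Sum.inl i = x_i`, `Sum.inr (Sum.inl i) = y_i`,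
`Sum.inr (Sum.inr i) = z_i`. -/
abbrev PS3 := MvPowerSeries (ℕ ⊕ ℕ ⊕ ℕ) PolyB

/-- Renaming of variables of a formal power series along a (variable-to-
variable, injective) map `g`. -/
def renamePS {σ τ : Type} (g : σ → τ) (f : MvPowerSeries σ PolyB) :
    MvPowerSeries τ PolyB :=
  fun e => if h : ∃ d : σ →₀ ℕ, Finsupp.mapDomain g d = e then f h.choose else 0

/-- The substitution sending `z_{2i-1}` to `z_i` (first alphabet) and
`z_{2i}` to `z'_i` (second alphabet): evaluation at the disjoint union of two
alphabets. -/
def dblVar : ℕ → ℕ ⊕ ℕ := fun k => if k % 2 = 1 then Sum.inl ((k+1)/2) else Sum.inr (k/2)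

def toPS2 : MvP →+* PS2 := MvPolynomial.coeToMvPowerSeries.ringHom
def X2 (i : ℕ) : PS2 := MvPowerSeries.X (Sum.inl i)
def Y2 (i : ℕ) : PS2 := MvPowerSeries.X (Sum.inr i)
def βC2 : PS2 := (MvPowerSeries.C : PolyB →+* MvPowerSeries (ℕ ⊕ ℕ) PolyB) Polynomial.X
/-- The inverse of `1 + β y_m` in `ℤ[β]⟦x;y⟧`. -/
def yInv2 (m : ℕ) : PS2 := MvPowerSeries.invOfUnit (1 + βC2 * Y2 m) 1

def X3 (i : ℕ) : PS3 := MvPowerSeries.X (Sum.inl i)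
def Y3 (i : ℕ) : PS3 := MvPowerSeries.X (Sum.inr (Sum.inl i))
def βC3 : PS3 := (MvPowerSeries.C : PolyB →+* MvPowerSeries (ℕ ⊕ ℕ ⊕ ℕ) PolyB) Polynomial.X
/-- The inverse of `1 + β y_m` in `ℤ[β]⟦x;y;z⟧`. -/
def yInv3 (m : ℕ) : PS3 := MvPowerSeries.invOfUnit (1 + βC3 * Y3 m) 1

/-- `y_c` for `c : ℤ`, with the convention `y_{-m} = -y_m/(1+βy_m)`. -/
def y3Of (c : ℤ) : PS3 :=
  if 0 ≤ c then Y3 c.toNat else - Y3 (-c).toNat * yInv3 (-c).toNat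

/-- `(1 + β y_c)⁻¹` for `c : ℤ` (with the convention above for `c < 0`). -/
def oneByInv3 (c : ℤ) : PS3 := MvPowerSeries.invOfUnit (1 + βC3 * y3Of c) 1

/-! ## Kirillov–Naruse double Grothendieck polynomials -/

/-- `𝔊_σ(y)`: the `x`-variables replaced by `y`'s, the `y`-variables set
to `0`, inside `ℤ[β]⟦x;y;z⟧`. -/
def GyMap : MvP →+* PS3 :=
  MvPolynomial.eval₂Hom (MvPowerSeries.C : PolyB →+* MvPowerSeries (ℕ ⊕ ℕ ⊕ ℕ) PolyB)
    (fun s => match s with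
      | Sum.inl i => Y3 i
      | Sum.inr _ => 0)

/-- `𝔊_τ(x)`: the `y`-variables set to `0`, inside `ℤ[β]⟦x;y;z⟧`. -/
def GxMap : MvP →+* PS3 :=
  MvPolynomial.eval₂Hom (MvPowerSeries.C : PolyB →+* MvPowerSeries (ℕ ⊕ ℕ ⊕ ℕ) PolyB)
    (fun s => match s with
      | Sum.inl i => X3 i
      | Sum.inr _ => 0)

/-- Embedding of `ℤ[β]⟦z⟧` into `ℤ[β]⟦x;y;z⟧`. -/
def zEmb (f : PS1) : PS3 := renamePS (fun k => Sum.inr (Sum.inr k)) f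

/-- `σ⁻¹ ∘ u ∘ τ = w` for the Demazure product of `W^X_∞` (computed by
folding Hecke words for `u` and `τ` starting from `σ⁻¹`; the result does not
depend on the chosen words). -/
def DemTriple (X : XType) (sg u tu w : SPerm) : Prop :=
  ∃ lu lt : List ℤ, HeckeWord X u lu ∧ HeckeWord X tu lt ∧
    demFold X sg⁻¹ (lu ++ lt) = w

/-- The Kirillov–Naruse double Grothendieck polynomial
`𝔊^X_w(x;y;z) = Σ_{σ⁻¹∘u∘τ = w} β^{ℓ(σ)+ℓ^X(u)+ℓ(τ)-ℓ^X(w)} 𝔊_σ(y) F^X_u(z) 𝔊_τ(x)`,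
defined coefficientwise (each coefficient receives finitely many
contributions); it depends on a choice `G` of the family of type A double
Grothendieck polynomials. -/
def KN (X : XType) (G : SPerm → MvP) (w : SPerm) : PS3 :=
  fun e => ∑ᶠ (t : SPerm × SPerm × SPerm)
    (_ : IsAperm t.1 ∧ IsW X t.2.1 ∧ IsAperm t.2.2 ∧ DemTriple X t.1 t.2.1 t.2.2 w),
    MvPowerSeries.coeff e
      ((MvPowerSeries.C : PolyB →+* MvPowerSeries (ℕ ⊕ ℕ ⊕ ℕ) PolyB)
          (Polynomial.X ^ (lenA t.1 + lenX X t.2.1 + lenA t.2.2 - lenX X w)) *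
        (GyMap (G t.1) * zEmb (KSF X t.2.1) * GxMap (G t.2.2)))

end

/-! ## Stable Grothendieck functions of type A -/

section

/-- A type A Hecke word: letters are positive, fold to `w` under the
Demazure product. -/
def HeckeWordA (w : SPerm) (l : List ℤ) : Prop :=
  (∀ a ∈ l, 0 < a) ∧ demFold XType.B 1 l = w

/-- `b ∈ C(a)`: compatible sequences of type A. -/
def CompatA (a : List ℤ) (b : List ℕ) : Prop :=
  b.length = a.length ∧ (∀ x ∈ b, 0 < x) ∧ b.Pairwise (· ≤ ·) ∧
  ∀ i : ℕ, i + 1 < a.length → a.getD i 0 ≤ a.getD (i+1) 0 →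
    b.getD i 0 < b.getD (i+1) 0

/-- The stable (symmetric) Grothendieck function `G_w(z)`. -/
def GA (w : SPerm) : PS1 :=
  fun d => ∑ᶠ (p : List ℤ × List ℕ)
    (_ : HeckeWordA w p.1 ∧ CompatA p.1 p.2 ∧ ∀ k : ℕ, d k = p.2.count k),
    (Polynomial.X : PolyB) ^ (p.1.length - lenA w)

/-- Demazure product condition `u ∘ v = w` in `S_∞`. -/
def DemPairA (u v w : SPerm) : Prop :=
  ∃ lv : List ℤ, HeckeWordA v lv ∧ demFold XType.B u lv = w

/-- `max({0} ∪ {i > 0 : u(i) ≠ i})`. -/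
def suppMax (u : SPerm) : ℕ := sSup {n : ℕ | 0 < n ∧ u (n : ℤ) ≠ (n : ℤ)}

end

/-! ## The coefficient ring 𝔸 (localization of ℤ[β][y] at the 1+βyᵢ) -/

section

/-- `ℤ[β][y_1,y_2,...]`. -/
abbrev Ry := MvPolynomial ℕ+ PolyB

/-- The multiplicative set generated by the `1 + β y_i`, `i ≥ 1`. -/
def Sy : Submonoid Ry :=
  Submonoid.closure
    (Set.range fun i : ℕ+ => (1 + MvPolynomial.C Polynomial.X * MvPolynomial.X i : Ry))

/-- The ring `𝔸`. -/
abbrev Aloc := Localization Sy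

/-- The polynomial ring `𝔸[x_1,x_2,...]`. -/
abbrev Ax := MvPolynomial ℕ+ Aloc

/-- The canonical map `ℤ[β][x;y] → 𝔸[x]`. -/
def toAx : MvP →+* Ax :=
  MvPolynomial.eval₂Hom
    ((MvPolynomial.C : Aloc →+* Ax).comp
      ((algebraMap Ry Aloc).comp (MvPolynomial.C : PolyB →+* Ry)))
    (fun s => match s with
      | Sum.inl i => if h : 0 < i then MvPolynomial.X (⟨i, h⟩ : ℕ+) else 0
      | Sum.inr i => if h : 0 < i then
          MvPolynomial.C (algebraMap Ry Aloc (MvPolynomial.X (⟨i, h⟩ : ℕ+))) else 0)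

/-- Homogeneity in `ℤ[β][y]` for the grading `deg β = -1`, `deg y_i = 1`. -/
def IsHomogRy (p : Ry) (d : ℤ) : Prop :=
  ∀ (m : ℕ+ →₀ ℕ) (a : ℕ), (MvPolynomial.coeff m p).coeff a ≠ 0 →
    (m.sum fun _ e => (e : ℤ)) - (a : ℤ) = d

/-- Homogeneity in `𝔸` of degree `d`: the element can be written with a
homogeneous numerator of degree `d` and a (degree zero) denominator in `Sy`. -/
def IsHomogA (x : Aloc) (d : ℤ) : Prop :=
  ∃ (p : Ry) (s : Sy), IsHomogRy p d ∧ IsHomogRy (s : Ry) 0 ∧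
    x * algebraMap Ry Aloc (s : Ry) = algebraMap Ry Aloc p

/-- The subring `𝔸^{(n)}` generated by `β`, by `y_1,…,y_{n-1}` and by the
inverses of `1+βy_1,…,1+βy_{n-1}`. -/
def AnSub (n : ℕ) : Subring Aloc :=
  Subring.closure
    ({algebraMap Ry Aloc (MvPolynomial.C Polynomial.X)} ∪
     {x | ∃ i : ℕ+, (i : ℕ) < n ∧ x = algebraMap Ry Aloc (MvPolynomial.X i)} ∪
     {x | ∃ i : ℕ+, (i : ℕ) < n ∧
        x * algebraMap Ry Aloc
          (1 + MvPolynomial.C Polynomial.X * MvPolynomial.X i : Ry) = 1})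

end

/-! ## Transition chains -/

section

/-- The list of reflections of a transition chain `γ = (δ; j_1 < ⋯ < j_r)`
with target column `k`: first (if `δ`) the reflection `t_{0,k}`, then the
reflections `t_{j_1,k}, …, t_{j_r,k}`. -/
def stepsR (k : ℕ) (γ : Bool × List ℤ) : List SPerm :=
  (if γ.1 then [tt 0 (k : ℤ)] else []) ++ γ.2.map (fun j => tt j (k : ℤ))

/-- Validity of the transition chain `γ = (δ; j_1 < ⋯ < j_r)` starting at
`w`, with target column `k`: `δ` only in type B, `j`'s increasing and `< k`,
`j_i ≠ -k`, `j_i ≠ 0` in type D, and each step increases `ℓ^X` by one. -/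
def chainValidR (X : XType) (w : SPerm) (k : ℕ) (γ : Bool × List ℤ) : Prop :=
  (γ.1 = true → X = XType.B) ∧ γ.2.Pairwise (· < ·) ∧
  (∀ j ∈ γ.2, j < (k : ℤ) ∧ j ≠ -(k : ℤ) ∧ (X = XType.D → j ≠ 0)) ∧
  IncSteps (lenX X) w (stepsR k γ)

/-- The endpoint of a chain. -/
def endR (w : SPerm) (k : ℕ) (γ : Bool × List ℤ) : SPerm := w * (stepsR k γ).prod

/-- The number of steps `δ + r` of a chain. -/
def lenR (γ : Bool × List ℤ) : ℕ := (if γ.1 then 1 else 0) + γ.2.length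

end

/-! ## Unimodal factorizations -/

section

/-- `b ∈ U(a)`: unimodal factorizations of the word `a`. -/
def UFact (a b : List ℤ) : Prop :=
  b.length = a.length ∧ (∀ x ∈ b, x ≠ 0) ∧
  b.Pairwise (fun m n => |m| < |n| ∨ (|m| = |n| ∧ m ≤ n)) ∧
  ∀ i : ℕ, i + 1 < b.length → b.getD i 0 = b.getD (i+1) 0 →
    (b.getD i 0 < 0 → |a.getD (i+1) 0| < |a.getD i 0|) ∧
    (0 < b.getD i 0 → |a.getD i 0| < |a.getD (i+1) 0|)

/-- `b ∈ U^X(a)`. -/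
def UFactX (X : XType) (a b : List ℤ) : Prop :=
  UFact a b ∧
  (X = XType.B → ∀ i : ℕ, i < b.length → a.getD i 0 = 0 → 0 < b.getD i 0) ∧
  (X = XType.D → ∀ i : ℕ, i < b.length →
    (a.getD i 0 = -1 ∨ a.getD i 0 = 1) → 0 < b.getD i 0)

end

/-! ## Reading words of skew shifted shapes -/

section

/-- The row-by-row reading word of the filling of `SD_{lam/mu}` placing
`j - i` in box `(i,j)`. -/
def aWord (lam mu : List ℕ) : List ℤ :=
  (List.range lam.length).flatMap (fun r =>
    (List.range (lam.getD r 0 - mu.getD r 0)).map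
      (fun s => ((mu.getD r 0 + s : ℕ) : ℤ)))

/-- The row-by-row reading word of the filling of `SD_{lam/mu}` placing
`j - i + 1` in each box `(i,j)` with `i ≠ j` and `(-1)^i` in each diagonal
box `(i,i)`. -/
def bWord (lam mu : List ℕ) : List ℤ :=
  (List.range lam.length).flatMap (fun r =>
    (List.range (lam.getD r 0 - mu.getD r 0)).map
      (fun s => if mu.getD r 0 + s = 0 then (-1 : ℤ) ^ (r + 1)
        else ((mu.getD r 0 + s : ℕ) : ℤ) + 1))

end

end

/-!
For `j ≠ 0`, counting inversions shows that `ℓ(w t_{j,k}) = ℓ(w) + 1` forces `w j < w k`, no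
`h ∈ (j, k)` with `w h ∈ (w j, w k)` (an empty middle), and an unchanged `ℓ0`; a step by `t_{0,k}`
changes `ℓ^B` by at least two, since `0` always lies in the middle. Along the chain in column
`k = LD(v)`, each step puts the smaller value `w j` at position `k`, and as long as `j ≥ -n` it
keeps the permutation in `W_n` and increasing to the right of `k`, which gives `u ≺_LD v`. The
empty middle forces `j ≥ -(n+1)`, and the step with `j = -(n+1)` puts `-(n+1)` at position `k`:
the result lies in `W_{n+1}`, increases from column `k` on (so its last descent is `< k`), and
admits no further step.
-/

def FixesBeyond (w : SPerm) (R : ℕ) : Prop := ∀ i : ℤ, (R : ℤ) < |i| → w i = i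

def AscendsFrom (w : SPerm) (c : ℤ) : Prop := ∀ i : ℤ, c ≤ i → w i < w (i + 1)

noncomputable def window (R : ℕ) : Finset ℤ := Finset.Icc (-(R : ℤ)) R

lemma mem_window {R : ℕ} {a : ℤ} : a ∈ window R ↔ |a| ≤ R := by
  rw [window, Finset.mem_Icc, abs_le]

lemma Equiv.Perm.odd_mul {w t : SPerm} (hw : Function.Odd w) (ht : Function.Odd t) :
    Function.Odd (w * t) := by
  rw [Equiv.Perm.coe_mul]
  exact hw.comp_odd ht

namespace FixesBeyond

variable {w : SPerm} {R : ℕ}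

lemma mono (h : FixesBeyond w R) {S : ℕ} (hRS : R ≤ S) : FixesBeyond w S :=
  fun i hi => h i (by omega)

lemma abs_apply_le (h : FixesBeyond w R) {i : ℤ} (hi : |i| ≤ R) : |w i| ≤ R := by
  by_contra hc
  have hwi : w i = i := w.injective (h (w i) (not_le.mp hc))
  rw [hwi] at hc
  exact hc hi

lemma finite_support (h : FixesBeyond w R) : {i : ℤ | w i ≠ i}.Finite :=
  (Set.finite_Icc (-(R : ℤ)) R).subset fun i hi =>
    abs_le.mp (not_lt.mp fun hout => hi (h i hout))

lemma mul_swap (h : FixesBeyond w R) {a b : ℤ} (ha : |a| ≤ R) (hb : |b| ≤ R) :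
    FixesBeyond (w * Equiv.swap a b) R := by
  intro i hi
  rw [Equiv.Perm.mul_apply,
    Equiv.swap_apply_of_ne_of_ne (by rintro rfl; omega) (by rintro rfl; omega)]
  exact h i hi

lemma abs_le_of_inversion (h : FixesBeyond w R) {i j : ℤ} (hij : i < j) (hinv : w j < w i) :
    |i| ≤ R ∧ |j| ≤ R := by
  by_cases hi : |i| ≤ R <;> by_cases hj : |j| ≤ R
  · exact ⟨hi, hj⟩
  · have hwj := h j (not_le.mp hj)
    have hwi := h.abs_apply_le hi
    rw [abs_le] at hi hwi
    rw [not_le, lt_abs] at hj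
    omega
  · have hwi := h i (not_le.mp hi)
    have hwj := h.abs_apply_le hj
    rw [abs_le] at hj hwj
    rw [not_le, lt_abs] at hi
    omega
  · have hwi := h i (not_le.mp hi)
    have hwj := h j (not_le.mp hj)
    omega

end FixesBeyond

section Reflections

variable {j k : ℤ}

lemma tt_apply (hj : j ≠ 0) (hk : k ≠ 0) (hjk : j ≠ k) (hjk' : j ≠ -k) (x : ℤ) :
    tt j k x = if x = j then k else if x = k then j else if x = -j then -k
      else if x = -k then -j else x := by
  rw [tt, if_neg hj, if_neg hk, if_neg (by omega), Equiv.Perm.mul_apply]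
  simp only [Equiv.swap_apply_def]
  split_ifs <;> omega

lemma tt_odd (j k : ℤ) : Function.Odd (tt j k) := by
  intro x
  unfold tt
  split_ifs <;> simp only [Equiv.Perm.mul_apply, Equiv.Perm.one_apply, Equiv.swap_apply_def] <;>
    split_ifs <;> omega

lemma tt_apply_left (hj : j ≠ 0) (hk : k ≠ 0) (hjk : j ≠ k) (hjk' : j ≠ -k) : tt j k j = k := by
  rw [tt_apply hj hk hjk hjk', if_pos rfl]

lemma tt_apply_right (hj : j ≠ 0) (hk : k ≠ 0) (hjk : j ≠ k) (hjk' : j ≠ -k) : tt j k k = j := by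
  rw [tt_apply hj hk hjk hjk', if_neg hjk.symm, if_pos rfl]

lemma tt_apply_neg_left (hj : j ≠ 0) (hk : k ≠ 0) (hjk : j ≠ k) (hjk' : j ≠ -k) :
    tt j k (-j) = -k := by
  rw [tt_apply hj hk hjk hjk', if_neg (by omega), if_neg (by omega), if_pos rfl]

lemma tt_apply_of_ne (hj : j ≠ 0) (hk : k ≠ 0) (hjk : j ≠ k) (hjk' : j ≠ -k) {x : ℤ}
    (hxj : x ≠ j) (hxk : x ≠ k) (hxj' : x ≠ -j) (hxk' : x ≠ -k) : tt j k x = x := by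
  rw [tt_apply hj hk hjk hjk', if_neg hxj, if_neg hxk, if_neg hxj', if_neg hxk']

lemma tt_mul_self (hj : j ≠ 0) (hk : k ≠ 0) (hjk : j ≠ k) (hjk' : j ≠ -k) :
    tt j k * tt j k = 1 := by
  ext x
  simp only [Equiv.Perm.mul_apply, Equiv.Perm.one_apply, tt_apply hj hk hjk hjk']
  split_ifs <;> omega

lemma tt_zero_left (k : ℤ) : tt 0 k = Equiv.swap (-k) k := by
  rw [tt, if_pos rfl]

lemma FixesBeyond.mul_tt {w : SPerm} {R : ℕ} (h : FixesBeyond w R) (hj : j ≠ 0) (hk : k ≠ 0)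
    (hjk : j ≠ k) (hjk' : j ≠ -k) (hjR : |j| ≤ R) (hkR : |k| ≤ R) :
    FixesBeyond (w * tt j k) R := by
  intro i hi
  rw [Equiv.Perm.mul_apply, tt_apply_of_ne hj hk hjk hjk' (by rintro rfl; omega)
    (by rintro rfl; omega) (by rintro rfl; rw [abs_neg] at hi; omega)
    (by rintro rfl; rw [abs_neg] at hi; omega)]
  exact h i hi

end Reflections

lemma Finset.sum_sum_eq_sum_sum_sdiff_pair {α β : Type*} [DecidableEq α] [AddCommMonoid β]
    {I : Finset α} {a b : α} (ha : a ∈ I) (hb : b ∈ I) (hab : a ≠ b) (f : α → α → β) :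
    ∑ x ∈ I, ∑ y ∈ I, f x y = ∑ x ∈ I \ {a, b}, ∑ y ∈ I \ {a, b}, f x y
      + ∑ x ∈ I \ {a, b}, (f x a + f x b + f a x + f b x) + (f a a + f a b + f b a + f b b) := by
  have split : ∀ g : α → β, ∑ x ∈ I, g x = ∑ x ∈ I \ {a, b}, g x + (g a + g b) := fun g => by
    rw [← Finset.sum_sdiff (Finset.insert_subset ha (Finset.singleton_subset_iff.2 hb)),
      Finset.sum_pair hab]
  simp only [split, Finset.sum_add_distrib]
  abel

noncomputable def midCount (w : SPerm) (a b : ℤ) : ℕ :=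
  ((Finset.Ioo a b).filter (fun h => w a < w h ∧ w h < w b)).card

def inversionIndicator (u : SPerm) (x y : ℤ) : ℤ := if x < y ∧ u y < u x then 1 else 0

section Counting

variable {w : SPerm} {R : ℕ}

lemma midCount_pos {a b : ℤ} (h0 : w 0 = 0) (ha : a < 0) (hb : 0 < b) (hwa : w a < 0)
    (hwb : 0 < w b) : 0 < midCount w a b :=
  Finset.card_pos.2
    ⟨0, Finset.mem_filter.2 ⟨Finset.mem_Ioo.2 ⟨ha, hb⟩, by rw [h0]; exact ⟨hwa, hwb⟩⟩⟩

lemma not_between_of_midCount_eq_zero {a b : ℤ} (h : midCount w a b = 0) {x : ℤ} (hax : a < x)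
    (hxb : x < b) : ¬ (w a < w x ∧ w x < w b) := fun hx =>
  (Finset.card_pos.2 ⟨x, Finset.mem_filter.2 ⟨Finset.mem_Ioo.2 ⟨hax, hxb⟩, hx⟩⟩).ne' h

lemma invP_eq_card (hw : FixesBeyond w R) :
    invP w = ((window R ×ˢ window R).filter
      (fun p : ℤ × ℤ => p.1 < p.2 ∧ w p.2 < w p.1)).card := by
  rw [invP, ← Set.ncard_coe_finset]
  congr 1
  ext ⟨i, j⟩
  simp only [Set.mem_ofPred_eq, Finset.coe_filter, Finset.mem_product, mem_window]
  exact ⟨fun h => ⟨hw.abs_le_of_inversion h.1 h.2, h⟩, fun h => h.2⟩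

lemma invP_eq_sum (hw : FixesBeyond w R) :
    (invP w : ℤ) = ∑ x ∈ window R, ∑ y ∈ window R, inversionIndicator w x y := by
  rw [invP_eq_card hw, Finset.card_filter, Finset.sum_product]
  push_cast
  rfl

lemma inversionIndicator_mul_swap_cross {a b x : ℤ} (hab : a < b) (hlt : w a < w b)
    (hxa : x ≠ a) (hxb : x ≠ b) :
    inversionIndicator (w * Equiv.swap a b) x a + inversionIndicator (w * Equiv.swap a b) x b
        + inversionIndicator (w * Equiv.swap a b) a x
        + inversionIndicator (w * Equiv.swap a b) b x
      = inversionIndicator w x a + inversionIndicator w x b + inversionIndicator w a x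
        + inversionIndicator w b x
        + 2 * if a < x ∧ x < b ∧ w a < w x ∧ w x < w b then 1 else 0 := by
  have hwxa : w x ≠ w a := w.injective.ne hxa
  have hwxb : w x ≠ w b := w.injective.ne hxb
  simp only [inversionIndicator, Equiv.Perm.mul_apply, Equiv.swap_apply_left,
    Equiv.swap_apply_right, Equiv.swap_apply_of_ne_of_ne hxa hxb]
  rcases hxa.lt_or_gt with h1 | h1 <;> rcases hxb.lt_or_gt with h2 | h2 <;>
    rcases hwxa.lt_or_gt with h3 | h3 <;> rcases hwxb.lt_or_gt with h4 | h4 <;>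
    simp [h1, h2, h3, h4, h1.not_gt, h2.not_gt, h3.not_gt, h4.not_gt] <;> omega

/-- Only the pairs meeting `{a, b}` change status; each `h ∈ (a, b)` with `w h ∈ (w a, w b)`
contributes two new inversions. -/
lemma invP_mul_swap (hw : FixesBeyond w R) {a b : ℤ} (hab : a < b) (ha : |a| ≤ R)
    (hb : |b| ≤ R) (hlt : w a < w b) :
    invP (w * Equiv.swap a b) = invP w + 1 + 2 * midCount w a b := by
  set w' := w * Equiv.swap a b
  set I := window R \ {a, b}
  have hoff : ∀ x ∈ I, x ≠ a ∧ x ≠ b := fun x hx => by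
    simpa only [Finset.mem_insert, Finset.mem_singleton, not_or] using (Finset.mem_sdiff.1 hx).2
  have hinner : ∑ x ∈ I, ∑ y ∈ I, inversionIndicator w' x y
      = ∑ x ∈ I, ∑ y ∈ I, inversionIndicator w x y :=
    Finset.sum_congr rfl fun x hx => Finset.sum_congr rfl fun y hy => by
      simp only [inversionIndicator, w', Equiv.Perm.mul_apply,
        Equiv.swap_apply_of_ne_of_ne (hoff x hx).1 (hoff x hx).2,
        Equiv.swap_apply_of_ne_of_ne (hoff y hy).1 (hoff y hy).2]
  have hcorner : inversionIndicator w' a a + inversionIndicator w' a b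
      + inversionIndicator w' b a + inversionIndicator w' b b
      = inversionIndicator w a a + inversionIndicator w a b
        + inversionIndicator w b a + inversionIndicator w b b + 1 := by
    simp [inversionIndicator, w', hab, hlt, hab.not_gt, hlt.not_gt]
  have hmid : (midCount w a b : ℤ)
      = ∑ x ∈ I, if a < x ∧ x < b ∧ w a < w x ∧ w x < w b then 1 else 0 := by
    rw [Finset.sum_boole, midCount]
    congr 2
    ext x
    simp only [I, Finset.mem_filter, Finset.mem_sdiff, Finset.mem_insert, Finset.mem_singleton,
      Finset.mem_Ioo, mem_window, abs_le]
    rw [abs_le] at ha hb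
    omega
  have ha' := mem_window.2 ha
  have hb' := mem_window.2 hb
  zify
  rw [invP_eq_sum (hw.mul_swap ha hb), invP_eq_sum hw,
    Finset.sum_sum_eq_sum_sum_sdiff_pair ha' hb' hab.ne,
    Finset.sum_sum_eq_sum_sum_sdiff_pair ha' hb' hab.ne, hinner, hcorner,
    Finset.sum_congr rfl fun x hx =>
      inversionIndicator_mul_swap_cross hab hlt (hoff x hx).1 (hoff x hx).2,
    Finset.sum_add_distrib, ← Finset.mul_sum, hmid]
  ring

lemma negCount_eq_card (hw : FixesBeyond w R) :
    negCount w = ((Finset.Icc (1 : ℤ) R).filter (fun i => w i < 0)).card := by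
  rw [negCount, ← Set.ncard_coe_finset]
  congr 1
  ext i
  simp only [Set.mem_ofPred_eq, Finset.coe_filter, Finset.mem_Icc]
  refine ⟨fun ⟨hi, hneg⟩ => ⟨⟨hi, ?_⟩, hneg⟩, fun ⟨⟨hi, _⟩, hneg⟩ => ⟨hi, hneg⟩⟩
  by_contra hiR
  have := hw i (by rw [abs_of_pos hi]; omega)
  omega

/-- Each positive `i` with `w i < 0` gives the inversion `(-i, i)`. -/
lemma negCount_le_invP (hw : FixesBeyond w R) (hodd : Function.Odd w) : negCount w ≤ invP w := by
  rw [negCount_eq_card hw, invP_eq_card hw]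
  refine Finset.card_le_card_of_injOn (fun i => (-i, i)) (fun i hi => ?_)
    fun i _ i' _ h => (Prod.ext_iff.1 h).2
  simp only [Finset.mem_coe, Finset.mem_filter, Finset.mem_Icc] at hi
  simp only [Finset.mem_coe, Finset.mem_filter, Finset.mem_product, mem_window, abs_neg, hodd i]
  rw [abs_of_pos (by omega)]
  omega

lemma negCount_sub_negCount {w' : SPerm} (hw : FixesBeyond w R) (hw' : FixesBeyond w' R)
    {s : Finset ℤ} (hs : s ⊆ Finset.Icc 1 R) (heq : ∀ i, 0 < i → i ∉ s → w' i = w i) :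
    (negCount w' : ℤ) - negCount w
      = ∑ i ∈ s, ((if w' i < 0 then 1 else 0) - if w i < 0 then 1 else 0) := by
  rw [negCount_eq_card hw, negCount_eq_card hw', Finset.card_filter, Finset.card_filter]
  push_cast
  rw [← Finset.sum_sub_distrib]
  refine (Finset.sum_subset hs fun i hi his => ?_).symm
  rw [heq i (Finset.mem_Icc.1 hi).1 his, sub_self]

end Counting

section Length

variable {X : XType} {w : SPerm} {R : ℕ} {j k : ℤ}

/-- Since `t_{j,k} = (j k)(-k -j)`, this is `invP_mul_swap` applied twice. -/
lemma invP_mul_tt (hw : FixesBeyond w R) (hodd : Function.Odd w) (hj : j ≠ 0) (hk : 0 < k)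
    (hjk : j < k) (hjk' : j ≠ -k) (hjR : |j| ≤ R) (hkR : |k| ≤ R) (hlt : w j < w k) :
    invP (w * tt j k) = invP w + 2 + 2 * midCount w j k
      + 2 * midCount (w * Equiv.swap j k) (-k) (-j) := by
  have hk' : (w * Equiv.swap j k) (-k) = -w k := by
    rw [Equiv.Perm.mul_apply, Equiv.swap_apply_of_ne_of_ne (by omega) (by omega), hodd]
  have hj' : (w * Equiv.swap j k) (-j) = -w j := by
    rw [Equiv.Perm.mul_apply, Equiv.swap_apply_of_ne_of_ne (by omega) (by omega), hodd]
  have htt : w * tt j k = w * Equiv.swap j k * Equiv.swap (-k) (-j) := by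
    rw [mul_assoc, tt, if_neg hj, if_neg hk.ne', if_neg (by omega), Equiv.swap_comm (-k)]
  rw [htt, invP_mul_swap (hw.mul_swap hjR hkR) (by omega) (by rwa [abs_neg]) (by rwa [abs_neg])
    (by rw [hk', hj']; omega), invP_mul_swap hw hjk hjR hkR hlt]
  ring

lemma negCount_mul_tt (hw : FixesBeyond w R) (hodd : Function.Odd w) (hj : j ≠ 0) (hk : 0 < k)
    (hjk : j < k) (hjk' : j ≠ -k) (hjR : |j| ≤ R) (hkR : |k| ≤ R) (hlt : w j < w k) :
    negCount (w * tt j k) = negCount w + if j < 0 ∧ w j < 0 ∧ 0 < w k then 2 else 0 := by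
  have hw' := hw.mul_tt hj hk.ne' hjk.ne hjk' hjR hkR
  have hwj0 : w j ≠ 0 := fun h => hj (w.injective (h.trans hodd.map_zero.symm))
  have hwk0 : w k ≠ 0 := fun h => hk.ne' (w.injective (h.trans hodd.map_zero.symm))
  have hwk : (w * tt j k) k = w j := by
    rw [Equiv.Perm.mul_apply, tt_apply_right hj hk.ne' hjk.ne hjk']
  rw [abs_le] at hjR hkR
  rcases hj.lt_or_gt with hneg | hpos
  · have hwj : (w * tt j k) (-j) = -w k := by
      rw [Equiv.Perm.mul_apply, tt_apply_neg_left hj hk.ne' hjk.ne hjk', hodd]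
    have hdiff := negCount_sub_negCount hw hw' (s := {-j, k})
      (by simp only [Finset.insert_subset_iff, Finset.singleton_subset_iff, Finset.mem_Icc]; omega)
      fun i hi his => by
        simp only [Finset.mem_insert, Finset.mem_singleton, not_or] at his
        rw [Equiv.Perm.mul_apply, tt_apply_of_ne hj hk.ne' hjk.ne hjk' (by omega) his.2 his.1
          (by omega)]
    rw [Finset.sum_pair (by omega), hwj, hwk, hodd j] at hdiff
    split_ifs at hdiff ⊢ <;> omega
  · have hwj : (w * tt j k) j = w k := by
      rw [Equiv.Perm.mul_apply, tt_apply_left hj hk.ne' hjk.ne hjk']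
    have hdiff := negCount_sub_negCount hw hw' (s := {j, k})
      (by simp only [Finset.insert_subset_iff, Finset.singleton_subset_iff, Finset.mem_Icc]; omega)
      fun i hi his => by
        simp only [Finset.mem_insert, Finset.mem_singleton, not_or] at his
        rw [Equiv.Perm.mul_apply, tt_apply_of_ne hj hk.ne' hjk.ne hjk' his.1 his.2 (by omega)
          (by omega)]
    rw [Finset.sum_pair hjk.ne, hwj, hwk] at hdiff
    split_ifs at hdiff ⊢ <;> omega

/-- The length grows by `1 + M + N ± ε`, where `M, N` are the two middle counts of
`invP_mul_tt` and `ε = 1` exactly when `t_{j,k}` changes two signs; in that case `0` is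
a middle point for both transpositions, so `M, N ≥ 1`. -/
lemma lenX_lt_lenX_mul_tt (hw : FixesBeyond w R) (hodd : Function.Odd w) (hj : j ≠ 0)
    (hk : 0 < k) (hjk : j < k) (hjk' : j ≠ -k) (hjR : |j| ≤ R) (hkR : |k| ≤ R)
    (hlt : w j < w k) :
    lenX X w < lenX X (w * tt j k) ∧ (lenX X (w * tt j k) = lenX X w + 1 →
      midCount w j k = 0 ∧ negCount (w * tt j k) = negCount w) := by
  have hinv := invP_mul_tt hw hodd hj hk hjk hjk' hjR hkR hlt
  have hneg := negCount_mul_tt hw hodd hj hk hjk hjk' hjR hkR hlt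
  have hle := negCount_le_invP hw hodd
  split_ifs at hneg with hsign
  · obtain ⟨hj0, hwj, hwk⟩ := hsign
    have hM := midCount_pos hodd.map_zero hj0 hk hwj hwk
    have hN := midCount_pos (w := w * Equiv.swap j k) (a := -k) (b := -j)
      (by rw [Equiv.Perm.mul_apply, Equiv.swap_apply_of_ne_of_ne hj.symm hk.ne, hodd.map_zero])
      (by omega) (by omega)
      (by rw [Equiv.Perm.mul_apply, Equiv.swap_apply_of_ne_of_ne (by omega) (by omega), hodd]
          omega)
      (by rw [Equiv.Perm.mul_apply, Equiv.swap_apply_of_ne_of_ne (by omega) (by omega), hodd]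
          omega)
    cases X <;> simp only [lenX] <;> omega
  · cases X <;> simp only [lenX] <;> omega

theorem lenX_mul_tt_eq_succ (hodd : Function.Odd w) (hw : FixesBeyond w R) (hj : j ≠ 0)
    (hk : 0 < k) (hjk : j < k) (hjk' : j ≠ -k) (h : lenX X (w * tt j k) = lenX X w + 1) :
    w j < w k ∧ midCount w j k = 0 ∧ negCount (w * tt j k) = negCount w := by
  set S := max R (max j.natAbs k.natAbs)
  have hwS : FixesBeyond w S := hw.mono (le_max_left _ _)
  have hjS : |j| ≤ S := by
    rw [Int.abs_eq_natAbs]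
    exact_mod_cast (le_max_left _ _).trans (le_max_right _ _)
  have hkS : |k| ≤ S := by
    rw [Int.abs_eq_natAbs]
    exact_mod_cast (le_max_right _ _).trans (le_max_right _ _)
  have hlt : w j < w k := by
    by_contra hge
    have hne : w j ≠ w k := w.injective.ne hjk.ne
    have hlt' : (w * tt j k) j < (w * tt j k) k := by
      rw [Equiv.Perm.mul_apply, Equiv.Perm.mul_apply, tt_apply_left hj hk.ne' hjk.ne hjk',
        tt_apply_right hj hk.ne' hjk.ne hjk']
      omega
    have hdec := (lenX_lt_lenX_mul_tt (X := X) (hwS.mul_tt hj hk.ne' hjk.ne hjk' hjS hkS)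
      (Equiv.Perm.odd_mul hodd (tt_odd j k)) hj hk hjk hjk' hjS hkS hlt').1
    rw [mul_assoc, tt_mul_self hj hk.ne' hjk.ne hjk', mul_one] at hdec
    omega
  exact ⟨hlt, (lenX_lt_lenX_mul_tt hwS hodd hj hk hjk hjk' hjS hkS hlt).2 h⟩

/-- `0` always lies strictly between `-k` and `k` with value strictly between `-w k` and `w k`. -/
lemma lenX_add_two_le_lenX_mul_swap_neg (hodd : Function.Odd w) (hw : FixesBeyond w R)
    (hk : 0 < k) (hkR : |k| ≤ R) (hwk : 0 < w k) :
    lenX XType.B w + 2 ≤ lenX XType.B (w * Equiv.swap (-k) k) := by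
  have hkR' : |-k| ≤ R := by rwa [abs_neg]
  have hinv := invP_mul_swap hw (by omega : -k < k) hkR' hkR (by rw [hodd]; omega)
  have hM := midCount_pos hodd.map_zero (by omega : -k < 0) hk (by rw [hodd]; omega) hwk
  have hdiff := negCount_sub_negCount hw (hw.mul_swap hkR' hkR) (s := {k})
    (by rw [abs_le] at hkR; simp only [Finset.singleton_subset_iff, Finset.mem_Icc]; omega)
    fun i hi his => by
      rw [Finset.mem_singleton] at his
      rw [Equiv.Perm.mul_apply, Equiv.swap_apply_of_ne_of_ne (by omega) his]
  rw [Finset.sum_singleton, Equiv.Perm.mul_apply, Equiv.swap_apply_right, hodd,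
    if_pos (by omega), if_neg (by omega)] at hdiff
  simp only [lenX]
  omega

theorem lenX_mul_tt_zero_ne_succ (hX : X ≠ XType.D) (hodd : Function.Odd w)
    (hw : FixesBeyond w R) (hk : 0 < k) : lenX X (w * tt 0 k) ≠ lenX X w + 1 := by
  have hB : ∀ u, lenX X u = lenX XType.B u := by
    cases X
    · exact fun _ => rfl
    · exact fun _ => rfl
    · exact absurd rfl hX
  have hwS : FixesBeyond w (max R k.natAbs) := hw.mono (le_max_left _ _)
  have hkS : |k| ≤ (max R k.natAbs : ℕ) := by
    rw [Int.abs_eq_natAbs]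
    exact_mod_cast le_max_right _ _
  rw [hB, hB, tt_zero_left]
  have hwk : w k ≠ 0 := fun h => hk.ne' (w.injective (h.trans hodd.map_zero.symm))
  rcases hwk.lt_or_gt with hneg | hpos
  · have hodd' : Function.Odd (w * Equiv.swap (-k) k) := by
      rw [← tt_zero_left]
      exact Equiv.Perm.odd_mul hodd (tt_odd 0 k)
    have h := lenX_add_two_le_lenX_mul_swap_neg hodd' (hwS.mul_swap (by rwa [abs_neg]) hkS) hk
      hkS (by rw [Equiv.Perm.mul_apply, Equiv.swap_apply_right, hodd]; omega)
    rw [mul_assoc, Equiv.swap_mul_self, mul_one] at h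
    omega
  · have := lenX_add_two_le_lenX_mul_swap_neg hodd hwS hk hkS hpos
    omega

end Length

section Chain

variable {X : XType} {n k : ℕ} {w : SPerm} {j : ℤ}

lemma neg_succ_le_of_midCount_eq_zero (hw : FixesBeyond w n) (hkn : k ≤ n)
    (hmid : midCount w j k = 0) : -((n : ℤ) + 1) ≤ j := by
  by_contra hj
  have hwj : w j = j := hw j (lt_abs.2 (Or.inr (by omega)))
  have hwn : w (-((n : ℤ) + 1)) = -((n : ℤ) + 1) := hw _ (lt_abs.2 (Or.inr (by omega)))
  have hwk := hw.abs_apply_le (i := k) (by rw [abs_of_nonneg (by omega)]; omega)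
  rw [abs_le] at hwk
  exact not_between_of_midCount_eq_zero hmid (x := -((n : ℤ) + 1)) (by omega) (by omega)
    ⟨by omega, by omega⟩

lemma mul_tt_apply_of_lt (hodd : Function.Odd w) (hk : 0 < k) (hjk : j < k) (hj0 : j ≠ 0)
    (hjk' : j ≠ -(k : ℤ)) {x : ℤ} (hx : (k : ℤ) < x) :
    (w * tt j k) x = if x = -j then -w k else w x := by
  have hk0 : (k : ℤ) ≠ 0 := by omega
  rw [Equiv.Perm.mul_apply]
  split_ifs with h
  · rw [h, tt_apply_neg_left hj0 hk0 hjk.ne hjk', hodd]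
  · rw [tt_apply_of_ne hj0 hk0 hjk.ne hjk' (by omega) (by omega) h (by omega)]

lemma mul_tt_apply_right (hk : 0 < k) (hjk : j < k) (hj0 : j ≠ 0) (hjk' : j ≠ -(k : ℤ)) :
    (w * tt j k) k = w j := by
  rw [Equiv.Perm.mul_apply, tt_apply_right hj0 (by omega) hjk.ne hjk']

lemma mul_tt_inside_window (hk : 0 < k) (hkn : k < n) (hodd : Function.Odd w)
    (hw : FixesBeyond w n) (hasc : AscendsFrom w (k + 1)) (hjk : j < k) (hj0 : j ≠ 0)
    (hjk' : j ≠ -(k : ℤ)) (hlt : w j < w k) (hmid : midCount w j k = 0) (hjn : -(n : ℤ) ≤ j) :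
    FixesBeyond (w * tt j k) n ∧ AscendsFrom (w * tt j k) (k + 1) := by
  refine ⟨hw.mul_tt hj0 (by omega) hjk.ne hjk' (abs_le.2 ⟨hjn, by omega⟩)
    (by rw [abs_of_nonneg (by omega)]; omega), fun i hi => ?_⟩
  rw [mul_tt_apply_of_lt hodd hk hjk hj0 hjk' (by omega),
    mul_tt_apply_of_lt hodd hk hjk hj0 hjk' (by omega)]
  split_ifs with h1 h2 h2
  · omega
  · subst h1
    have := hasc (-j) hi
    rw [hodd] at this
    omega
  · -- `w (j + 1) > w j` lies outside the empty middle `(w j, w k)`, hence `w (j + 1) > w k`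
    have hstep : w i < w (-j) := by rw [← h2]; exact hasc i hi
    have hwi : w i = -w (j + 1) := by rw [← hodd, show -(j + 1) = i by omega]
    have hne : w (j + 1) ≠ w k := w.injective.ne (by omega)
    have := not_between_of_midCount_eq_zero hmid (x := j + 1) (by omega) (by omega)
    rw [hodd] at hstep
    omega
  · exact hasc i hi

lemma mul_tt_exits_window (hk : 0 < k) (hkn : k < n) (hodd : Function.Odd w)
    (hw : FixesBeyond w n) (hasc : AscendsFrom w (k + 1)) (hjk' : j ≠ -(k : ℤ))
    (hmid : midCount w j k = 0) (hj : j = -((n : ℤ) + 1)) :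
    FixesBeyond (w * tt j k) (n + 1) ∧ AscendsFrom (w * tt j k) k ∧
      (w * tt j k) k = -((n : ℤ) + 1) := by
  have hjk : j < k := by omega
  have hj0 : j ≠ 0 := by omega
  have hwj : w j = j := hw j (lt_abs.2 (Or.inr (by omega)))
  have hbound : ∀ x : ℤ, |x| ≤ n → -(n : ℤ) ≤ w x ∧ w x ≤ n := fun x hx =>
    abs_le.1 (hw.abs_apply_le hx)
  have hwk := hbound k (by rw [abs_of_nonneg (by omega)]; omega)
  have hukk : (w * tt j k) k = -((n : ℤ) + 1) := by
    rw [mul_tt_apply_right hk hjk hj0 hjk', hwj, hj]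
  refine ⟨(hw.mono n.le_succ).mul_tt hj0 (by omega) hjk.ne hjk' (by rw [hj, abs_le]; omega)
    (by rw [abs_of_nonneg (by omega)]; omega), fun i hi => ?_, hukk⟩
  rcases hi.eq_or_lt with rfl | hi
  · rw [hukk, mul_tt_apply_of_lt hodd hk hjk hj0 hjk' (by omega), if_neg (by omega)]
    have := hbound (k + 1) (by rw [abs_of_nonneg (by omega)]; omega)
    omega
  rw [mul_tt_apply_of_lt hodd hk hjk hj0 hjk' hi,
    mul_tt_apply_of_lt hodd hk hjk hj0 hjk' (by omega)]
  split_ifs with h1 h2 h2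
  · omega
  · rw [hw (i + 1) (lt_abs.2 (Or.inl (by omega)))]
    omega
  · obtain rfl : i = n := by omega
    have hwn := hbound n (by rw [abs_of_nonneg (by omega)])
    have hne : w (-(n : ℤ)) ≠ w k := w.injective.ne (by omega)
    have := not_between_of_midCount_eq_zero hmid (x := -(n : ℤ)) (by omega) (by omega)
    rw [hodd, hwj] at this
    rw [hodd] at hne
    omega
  · exact hasc i (by omega)

theorem cover_step_cases (hk : 0 < k) (hkn : k < n) (hodd : Function.Odd w)
    (hw : FixesBeyond w n) (hasc : AscendsFrom w (k + 1)) (hjk : j < k) (hjk' : j ≠ -(k : ℤ))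
    (hjD : X = XType.D → j ≠ 0) (hstep : lenX X (w * tt j k) = lenX X w + 1) :
    negCount (w * tt j k) = negCount w ∧
      ((FixesBeyond (w * tt j k) n ∧ AscendsFrom (w * tt j k) (k + 1) ∧
          (w * tt j k) k < w k) ∨
        (j = -((n : ℤ) + 1) ∧ FixesBeyond (w * tt j k) (n + 1) ∧
          AscendsFrom (w * tt j k) k)) := by
  have hj0 : j ≠ 0 := by
    rintro rfl
    exact lenX_mul_tt_zero_ne_succ (fun hXD => hjD hXD rfl) hodd hw (by omega) hstep
  obtain ⟨hlt, hmid, hneg⟩ := lenX_mul_tt_eq_succ hodd hw hj0 (by omega) hjk hjk' hstep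
  refine ⟨hneg, ?_⟩
  rcases (neg_succ_le_of_midCount_eq_zero hw hkn.le hmid).eq_or_lt with hj | hj
  · obtain ⟨hfix, hasc', -⟩ := mul_tt_exits_window hk hkn hodd hw hasc hjk' hmid hj.symm
    exact Or.inr ⟨hj.symm, hfix, hasc'⟩
  · obtain ⟨hfix, hasc'⟩ :=
      mul_tt_inside_window hk hkn hodd hw hasc hjk hj0 hjk' hlt hmid (by omega)
    exact Or.inl ⟨hfix, hasc', by rwa [mul_tt_apply_right hk hjk hj0 hjk']⟩

lemma lenX_mul_tt_ne_succ_of_apply_eq {u : SPerm} {r : ℤ} (hrD : X = XType.D → r ≠ 0)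
    (hodd : Function.Odd u) (hu : FixesBeyond u (n + 1)) (hk : 0 < k) (hkn : k ≤ n)
    (huk : u k = -((n : ℤ) + 1)) (hr : -((n : ℤ) + 1) < r) (hrk : r < k)
    (hrk' : r ≠ -(k : ℤ)) : lenX X (u * tt r k) ≠ lenX X u + 1 := by
  intro hstep
  by_cases hr0 : r = 0
  · subst hr0
    exact lenX_mul_tt_zero_ne_succ (fun hXD => hrD hXD rfl) hodd hu (by omega) hstep
  have hlt := (lenX_mul_tt_eq_succ hodd hu hr0 (by omega) hrk hrk' hstep).1
  have hur := abs_le.1 (hu.abs_apply_le (i := r) (abs_le.2 ⟨by omega, by omega⟩))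
  omega

def ChainOutcome (n k : ℕ) (w u : SPerm) : Prop :=
  (FixesBeyond u n ∧ AscendsFrom u (k + 1) ∧ u k < w k) ∨
    (FixesBeyond u (n + 1) ∧ AscendsFrom u k)

lemma ChainOutcome.of_apply_lt {w' u : SPerm} (h : ChainOutcome n k w' u)
    (hlt : w' k < w k) : ChainOutcome n k w u :=
  h.imp_left fun ⟨hfix, hasc, hu⟩ => ⟨hfix, hasc, hu.trans hlt⟩

theorem chainOutcome_of_incSteps (hk : 0 < k) (hkn : k < n) (js : List ℤ)
    (hsort : (j :: js).Pairwise (· < ·))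
    (hjs : ∀ i ∈ j :: js, i < k ∧ i ≠ -(k : ℤ) ∧ (X = XType.D → i ≠ 0))
    (hodd : Function.Odd w) (hw : FixesBeyond w n) (hasc : AscendsFrom w (k + 1))
    (hinc : IncSteps (lenX X) w ((j :: js).map fun i => tt i (k : ℤ))) :
    Function.Odd (w * ((j :: js).map fun i => tt i (k : ℤ)).prod) ∧
      negCount (w * ((j :: js).map fun i => tt i (k : ℤ)).prod) = negCount w ∧
      ChainOutcome n k w (w * ((j :: js).map fun i => tt i (k : ℤ)).prod) := by
  induction js generalizing j w with
  | nil =>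
    obtain ⟨hjk, hjk', hjD⟩ := hjs j List.mem_cons_self
    obtain ⟨hneg, hout⟩ := cover_step_cases hk hkn hodd hw hasc hjk hjk' hjD hinc.1
    simp only [List.map_cons, List.map_nil, List.prod_cons, List.prod_nil, mul_one]
    exact ⟨Equiv.Perm.odd_mul hodd (tt_odd j k), hneg, hout.imp_right fun h => h.2⟩
  | cons j' js ih =>
    obtain ⟨hjk, hjk', hjD⟩ := hjs j List.mem_cons_self
    obtain ⟨hstep, hinc'⟩ := hinc
    obtain ⟨hneg, hout⟩ := cover_step_cases hk hkn hodd hw hasc hjk hjk' hjD hstep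
    have hodd' := Equiv.Perm.odd_mul hodd (tt_odd j k)
    have hjj' : j < j' := List.rel_of_pairwise_cons hsort List.mem_cons_self
    rcases hout with ⟨hfix, hasc', hlt⟩ | ⟨hj, hfix, -⟩
    · obtain ⟨hodd'', hneg', hout'⟩ := ih hsort.of_cons
        (fun i hi => hjs i (List.mem_cons_of_mem j hi)) hodd' hfix hasc' hinc'
      rw [List.map_cons, List.prod_cons, ← mul_assoc]
      exact ⟨hodd'', hneg'.trans hneg, hout'.of_apply_lt hlt⟩
    · obtain ⟨hj'k, hj'k', hj'D⟩ := hjs j' (List.mem_cons_of_mem j List.mem_cons_self)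
      refine absurd hinc'.1 (lenX_mul_tt_ne_succ_of_apply_eq hj'D hodd' hfix hk hkn.le ?_
        (by omega) hj'k hj'k')
      rw [mul_tt_apply_right hk hjk (by omega) hjk', hw j (lt_abs.2 (Or.inr (by omega))), hj]

end Chain

section LastDescent

variable {u : SPerm}

lemma AscendsFrom.lt_of_mem_desSet {c : ℤ} (h : AscendsFrom u c) {i : ℕ} (hi : i ∈ DesSet u) :
    (i : ℤ) < c := by
  by_contra hci
  exact absurd hi.2 (not_lt.2 (h i (not_lt.1 hci)).le)

lemma LD_lt_of_ascendsFrom {c : ℕ} (h : AscendsFrom u c) (hc : 0 < c) : LD u < c := by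
  have : LD u ≤ c - 1 := csSup_le' fun i hi => by
    have := h.lt_of_mem_desSet hi
    omega
  omega

lemma LD_eq_of_ascendsFrom {c : ℕ} (h : AscendsFrom u (c + 1)) (hc : 0 < c)
    (hdes : u (c + 1) < u c) : LD u = c :=
  le_antisymm (Nat.le_of_lt_succ (LD_lt_of_ascendsFrom (by exact_mod_cast h) c.succ_pos))
    (le_csSup ⟨c, fun i hi => by have := h.lt_of_mem_desSet hi; omega⟩ ⟨hc, hdes⟩)

lemma AscendsFrom.of_succ {c : ℤ} (h : AscendsFrom u (c + 1)) (hc : u c < u (c + 1)) :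
    AscendsFrom u c := fun i hi => by
  rcases hi.eq_or_lt with rfl | hi
  exacts [hc, h i hi]

lemma precLD_of_ascendsFrom {v : SPerm} (hLD : 0 < LD v) (hasc : AscendsFrom u (LD v + 1))
    (hlt : u (LD v) < v (LD v)) : precLD u v := by
  have hne : u (LD v) ≠ u (LD v + 1) := u.injective.ne (by omega)
  rcases hne.lt_or_gt with hup | hdown
  · exact Or.inl (LD_lt_of_ascendsFrom (hasc.of_succ hup) hLD)
  · have hLDu := LD_eq_of_ascendsFrom hasc hLD hdown
    exact Or.inr ⟨hLDu ▸ hLD, hLDu, by rwa [hLDu]⟩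

lemma LD_lt_and_ascendsFrom {n : ℕ} (hu : FixesBeyond u n) (hLD : 0 < LD u) :
    LD u < n ∧ AscendsFrom u (LD u + 1) := by
  have hbd : ∀ i ∈ DesSet u, i < n := fun i hi => by
    by_contra hin
    have hfix := hu (i + 1) (lt_abs.2 (Or.inl (by omega)))
    have hui : u i ≤ i := by
      rcases (not_lt.1 hin).eq_or_lt with rfl | hlt
      · exact (abs_le.1 (hu.abs_apply_le (by rw [abs_of_nonneg (by omega)]))).2
      · exact (hu i (lt_abs.2 (Or.inl (by omega)))).le
    have := hi.2
    omega
  have hne : (DesSet u).Nonempty := by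
    by_contra hemp
    rw [Set.not_nonempty_iff_eq_empty] at hemp
    rw [LD, hemp, csSup_empty] at hLD
    exact lt_irrefl 0 hLD
  have hbdd : BddAbove (DesSet u) := ⟨n, fun i hi => (hbd i hi).le⟩
  refine ⟨hbd _ (Nat.sSup_mem hne hbdd), fun i hi => ?_⟩
  by_contra hdes
  have hne' : u i ≠ u (i + 1) := u.injective.ne (by omega)
  have hmem : i.toNat ∈ DesSet u := ⟨by omega, by rw [Int.toNat_of_nonneg (by omega)]; omega⟩
  have := le_csSup hbdd hmem
  rw [← LD] at this
  omega

end LastDescent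

lemma IsW.odd {X : XType} {w : SPerm} (h : IsW X w) : Function.Odd w := by
  cases X
  exacts [h.1, h.1, h.1.1]

lemma isWn_of_odd {X : XType} {w : SPerm} {N : ℕ} (hodd : Function.Odd w)
    (hw : FixesBeyond w N) (hD : X = XType.D → Even (negCount w)) : IsWn X N w := by
  refine ⟨?_, hw⟩
  cases X
  exacts [⟨hodd, hw.finite_support⟩, ⟨hodd, hw.finite_support⟩,
    ⟨⟨hodd, hw.finite_support⟩, hD rfl⟩]

theorem last_descent_chain_lemma_general (X : XType) (n : ℕ)
    (v : SPerm) (hv : IsWn X n v) (hLD : 0 < LD v)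
    (js : List ℤ) (hl : 1 ≤ js.length)
    (hsorted : (js.Pairwise (· < ·) ∧ ∀ j ∈ js, j < (LD v : ℤ)) ∨
      (X = XType.B ∧ js.getD 0 0 = 0 ∧ js.tail.Pairwise (· < ·) ∧
        ∀ j ∈ js.tail, j < (LD v : ℤ)))
    (hrefl : ∀ j ∈ js, j ≠ -(LD v : ℤ) ∧ (X = XType.D → j ≠ 0))
    (hinc : IncSteps (lenX X) v (js.map (fun j => tt j (LD v : ℤ)))) :
    (IsWn X n (v * (js.map (fun j => tt j (LD v : ℤ))).prod) ∧
      precLD (v * (js.map (fun j => tt j (LD v : ℤ))).prod) v) ∨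
    (IsWn X (n + 1) (v * (js.map (fun j => tt j (LD v : ℤ))).prod) ∧
      LD (v * (js.map (fun j => tt j (LD v : ℤ))).prod) < LD v) := by
  have hodd := hv.1.odd
  have hfix : FixesBeyond v n := hv.2
  obtain ⟨hLDn, hasc⟩ := LD_lt_and_ascendsFrom hfix hLD
  obtain ⟨j, js, rfl⟩ := List.exists_cons_of_length_pos hl
  rcases hsorted with ⟨hsort, hlt⟩ | ⟨rfl, hhead, -⟩
  · obtain ⟨hodd', hneg, hout⟩ := chainOutcome_of_incSteps hLD hLDn js hsort
      (fun i hi => ⟨hlt i hi, hrefl i hi⟩) hodd hfix hasc hinc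
    have hW : ∀ {N}, FixesBeyond _ N → IsWn X N _ := fun h =>
      isWn_of_odd hodd' h fun hX => by subst hX; exact hneg ▸ hv.1.2
    rcases hout with ⟨hfix', hasc', hlt'⟩ | ⟨hfix', hasc'⟩
    · exact Or.inl ⟨hW hfix', precLD_of_ascendsFrom hLD hasc' hlt'⟩
    · exact Or.inr ⟨hW hfix', LD_lt_of_ascendsFrom hasc' hLD⟩
  · obtain rfl : j = 0 := hhead
    exact absurd hinc.1 (lenX_mul_tt_zero_ne_succ (by decide) hodd hfix (by omega))

/-- Technical lemma on chains from the last descent: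
multiplying `v ∈ W^X_n` by a length-increasing chain of reflections
`t_{j_1,k} ⋯ t_{j_l,k}` in the column `k = LD(v)` yields an element that is
either in `W^X_n` and `≺_LD v`, or in `W^X_{n+1}` with smaller last descent. -/
theorem last_descent_chain_lemma (X : XType) (n : ℕ) (hn : 0 < n)
    (v : SPerm) (hv : IsWn X n v) (hLD : 0 < LD v)
    (js : List ℤ) (hl : 1 ≤ js.length)
    (hsorted : (js.Pairwise (· < ·) ∧ ∀ j ∈ js, j < (LD v : ℤ)) ∨
      (X = XType.B ∧ js.getD 0 0 = 0 ∧ js.tail.Pairwise (· < ·) ∧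
        ∀ j ∈ js.tail, j < (LD v : ℤ)))
    (hrefl : ∀ j ∈ js, j ≠ -(LD v : ℤ) ∧ (X = XType.D → j ≠ 0))
    (hinc : IncSteps (lenX X) v (js.map (fun j => tt j (LD v : ℤ)))) :
    (IsWn X n (v * (js.map (fun j => tt j (LD v : ℤ))).prod) ∧
      precLD (v * (js.map (fun j => tt j (LD v : ℤ))).prod) v) ∨
    (IsWn X (n + 1) (v * (js.map (fun j => tt j (LD v : ℤ))).prod) ∧
      LD (v * (js.map (fun j => tt j (LD v : ℤ))).prod) < LD v) :=
  last_descent_chain_lemma_general X n v hv hLD js hl hsorted hrefl hinc
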